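/- Let P, Q > 0 and for T > 0 set a(T) := (P/Q)·(1 − e^{−QT}). Let φ:(0,∞)→(0,∞) satisfy lim_{T→∞} φ(T) = ∞, and for each T > 0 let X_T be a Poisson random variable with mean a(T), i.e. P(X_T = x) = (a(T))^x e^{−a(T)}/x! for x ∈ ℤ⁺ = {0,1,2,…}. Then for every x > 0: lim_{ε→0⁺} limsup_{T→∞} (1/(φ(T)·ln φ(T))) · ln P( x − ε ≤ X_T/φ(T) ≤ x + ε ) = lim_{ε→0⁺} liminf_{T→∞} (1/(φ(T)·ln φ(T))) · ln P( x − ε ≤ X_T/φ(T) ≤ x + ε ) = −x. -/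

import Mathlib

/-!
For fixed `ε ∈ (0, x)` the window `[φ(x-ε), φ(x+ε)]` eventually contains `n = ⌈φ(x-ε)⌉`, and since
`n` is far beyond the mean `a(T) ≤ P/Q`, the Poisson masses from `n` on decay faster than a
geometric series of ratio `1/2`. Hence the probability lies between `p(n)` and `2 p(n)`, where
`log p(n) = n log a - a - log n!`. With `n log n - n ≤ log n! ≤ n log n` this is
`-(x-ε) φ log φ (1 + o(1))`, so the inner limit exists and equals `-(x-ε)`; both the `limsup` and
the `liminf` are therefore `-(x-ε)`, which tends to `-x`.
-/

open Filter Real Topology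

/-- The probability that a Poisson random variable `X_T` with mean
`a(T) = (P/Q)(1 - e^{-QT})`, rescaled by `φ(T)`, lies in `[x-ε, x+ε]`: the sum of the Poisson
mass function over all integers `k` with `φ(T)(x-ε) ≤ k ≤ φ(T)(x+ε)`. -/
noncomputable def poissonProb (P Q φT x ε T : ℝ) : ℝ :=
  ∑' k : ℕ, if φT * (x - ε) ≤ (k : ℝ) ∧ (k : ℝ) ≤ φT * (x + ε)
    then (P / Q * (1 - Real.exp (-(Q * T)))) ^ k
      * Real.exp (-(P / Q * (1 - Real.exp (-(Q * T))))) / (Nat.factorial k)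
    else 0

lemma log_factorial_le_mul_log (n : ℕ) : log n.factorial ≤ n * log n := by
  rw [← log_pow]
  exact log_le_log (by positivity) (mod_cast n.factorial_le_pow)

lemma mul_log_sub_le_log_factorial (n : ℕ) : n * log n - n ≤ log n.factorial := by
  rcases n.eq_zero_or_pos with rfl | hn
  · simp
  have h : (n : ℝ) ^ n ≤ n.factorial * exp n := by
    rw [← div_le_iff₀' (by positivity)]
    exact pow_div_factorial_le_exp (n : ℝ) n.cast_nonneg n
  have := log_le_log (by positivity) h
  rwa [log_pow, log_mul (by positivity) (exp_ne_zero _), log_exp, ← sub_le_iff_le_add] at this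

noncomputable def poissonTerm (a : ℝ) (k : ℕ) : ℝ := a ^ k * exp (-a) / k.factorial

lemma poissonTerm_nonneg {a : ℝ} (ha : 0 ≤ a) (k : ℕ) : 0 ≤ poissonTerm a k := by
  unfold poissonTerm; positivity

lemma poissonTerm_pos {a : ℝ} (ha : 0 < a) (k : ℕ) : 0 < poissonTerm a k := by
  unfold poissonTerm; positivity

lemma log_poissonTerm {a : ℝ} (ha : 0 < a) (k : ℕ) :
    log (poissonTerm a k) = k * log a - a - log k.factorial := by
  rw [poissonTerm, log_div (by positivity) (by positivity), log_mul (by positivity) (exp_ne_zero _),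
    log_pow, log_exp, ← sub_eq_add_neg]

lemma summable_poissonTerm (a : ℝ) : Summable (poissonTerm a) :=
  (summable_pow_div_factorial a).mul_right (exp (-a)) |>.congr fun _ ↦ div_mul_eq_mul_div _ _ _

lemma poissonTerm_add_le {a : ℝ} {n : ℕ} (ha : 0 ≤ a) (h : 2 * a ≤ n + 1) (i : ℕ) :
    poissonTerm a (n + i) ≤ poissonTerm a n * (1 / 2) ^ i := by
  have hfact : (n.factorial * (n + 1) ^ i : ℝ) ≤ (n + i).factorial :=
    mod_cast Nat.factorial_mul_pow_le_factorial
  have hratio : a / (n + 1) ≤ 1 / 2 := by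
    rw [div_le_div_iff₀ (by positivity) two_pos]; linarith
  calc poissonTerm a (n + i) ≤ a ^ (n + i) * exp (-a) / (n.factorial * (n + 1) ^ i) := by
        unfold poissonTerm; gcongr
    _ = poissonTerm a n * (a / (n + 1)) ^ i := by
        unfold poissonTerm; rw [div_pow, pow_add]; field_simp
    _ ≤ poissonTerm a n * (1 / 2) ^ i := by
        gcongr
        exact poissonTerm_nonneg ha n

noncomputable def poissonWindowTerm (a L U : ℝ) (k : ℕ) : ℝ :=
  if L ≤ (k : ℝ) ∧ (k : ℝ) ≤ U then poissonTerm a k else 0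

noncomputable def poissonWindow (a L U : ℝ) : ℝ := ∑' k, poissonWindowTerm a L U k

lemma poissonProb_eq_poissonWindow (P Q φT x ε T : ℝ) :
    poissonProb P Q φT x ε T =
      poissonWindow (P / Q * (1 - exp (-(Q * T)))) (φT * (x - ε)) (φT * (x + ε)) := rfl

section poissonWindow

variable {a L U : ℝ}

lemma poissonWindowTerm_nonneg (ha : 0 ≤ a) (k : ℕ) : 0 ≤ poissonWindowTerm a L U k := by
  unfold poissonWindowTerm; split_ifs <;> [exact poissonTerm_nonneg ha k; rfl]

lemma poissonWindowTerm_le (ha : 0 ≤ a) (k : ℕ) :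
    poissonWindowTerm a L U k ≤ poissonTerm a k := by
  unfold poissonWindowTerm; split_ifs <;> [rfl; exact poissonTerm_nonneg ha k]

lemma poissonTerm_ceil_le_poissonWindow (ha : 0 ≤ a) (hU : (⌈L⌉₊ : ℝ) ≤ U) :
    poissonTerm a ⌈L⌉₊ ≤ poissonWindow a L U := by
  have hsum : Summable (poissonWindowTerm a L U) :=
    (summable_poissonTerm a).of_nonneg_of_le (poissonWindowTerm_nonneg ha)
      (poissonWindowTerm_le ha)
  have := hsum.le_tsum ⌈L⌉₊ fun k _ ↦ poissonWindowTerm_nonneg ha k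
  rwa [poissonWindowTerm, if_pos ⟨Nat.le_ceil L, hU⟩] at this

lemma poissonWindow_le_two_mul (ha : 0 ≤ a) (h : 2 * a ≤ ⌈L⌉₊ + 1) :
    poissonWindow a L U ≤ 2 * poissonTerm a ⌈L⌉₊ := by
  set n := ⌈L⌉₊
  have hsupp : Function.support (poissonWindowTerm a L U) ⊆ Set.range (n + ·) := by
    intro k hk
    have hL : L ≤ k := by
      by_contra hL
      exact hk (by simp [poissonWindowTerm, hL])
    exact ⟨k - n, Nat.add_sub_of_le (Nat.ceil_le.2 hL)⟩
  have hshift (i : ℕ) : poissonWindowTerm a L U (n + i) ≤ poissonTerm a n * (1 / 2) ^ i :=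
    (poissonWindowTerm_le ha _).trans (poissonTerm_add_le ha h i)
  have hgeom := hasSum_geometric_two.mul_left (poissonTerm a n)
  calc poissonWindow a L U = ∑' i, poissonWindowTerm a L U (n + i) :=
        ((add_right_injective n).tsum_eq hsupp).symm
    _ ≤ ∑' i, poissonTerm a n * (1 / 2) ^ i :=
        (hgeom.summable.of_nonneg_of_le (fun _ ↦ poissonWindowTerm_nonneg ha _)
          hshift).tsum_le_tsum hshift hgeom.summable
    _ = 2 * poissonTerm a n := by rw [hgeom.tsum_eq, mul_comm]

end poissonWindow

section Asymptotics

variable {α : Type*} {l : Filter α} {φ : α → ℝ}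

lemma tendsto_log_div_of_le_of_le_const_mul {c S w : α → ℝ} {C L : ℝ} (hC : 0 < C)
    (hw : Tendsto w l atTop) (hc : ∀ᶠ t in l, 0 < c t) (hcS : ∀ᶠ t in l, c t ≤ S t)
    (hSc : ∀ᶠ t in l, S t ≤ C * c t) (h : Tendsto (fun t ↦ log (c t) / w t) l (𝓝 L)) :
    Tendsto (fun t ↦ log (S t) / w t) l (𝓝 L) := by
  have hupper : Tendsto (fun t ↦ log C / w t + log (c t) / w t) l (𝓝 L) := by
    simpa using (tendsto_const_nhds.div_atTop hw).add h
  refine tendsto_of_tendsto_of_tendsto_of_le_of_le' h hupper ?_ ?_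
  · filter_upwards [hc, hcS, hw.eventually_gt_atTop 0] with t hc hcS hw
    gcongr
  · filter_upwards [hc, hcS, hSc, hw.eventually_gt_atTop 0] with t hc hcS hSc hw
    rw [← add_div, ← log_mul hC.ne' hc.ne']
    gcongr
    linarith

variable (hφ : Tendsto φ l atTop)
include hφ

lemma tendsto_mul_log_div_mul_log {n : α → ℝ} {y : ℝ} (hy : 0 < y)
    (hn : Tendsto (fun t ↦ n t / φ t) l (𝓝 y)) :
    Tendsto (fun t ↦ n t * log (n t) / (φ t * log (φ t))) l (𝓝 y) := by
  have hlim : Tendsto (fun t ↦ n t / φ t * (log (n t / φ t) / log (φ t) + 1)) l (𝓝 (y * (0 + 1))) :=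
    hn.mul (((hn.log hy.ne').div_atTop (tendsto_log_atTop.comp hφ)).add_const 1)
  rw [zero_add, mul_one] at hlim
  refine hlim.congr' ?_
  filter_upwards [hn.eventually (eventually_gt_nhds hy), hφ.eventually_gt_atTop 1] with t hnφ hφ1
  have hn0 : n t ≠ 0 := by rintro h; simp [h] at hnφ
  have hlogφ : log (φ t) ≠ 0 := (log_pos hφ1).ne'
  rw [log_div hn0 (by positivity)]
  field_simp
  ring

lemma tendsto_log_factorial_div_mul_log {n : α → ℕ} {y : ℝ} (hy : 0 < y)
    (hn : Tendsto (fun t ↦ (n t : ℝ) / φ t) l (𝓝 y)) :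
    Tendsto (fun t ↦ log (n t).factorial / (φ t * log (φ t))) l (𝓝 y) := by
  have hupper := tendsto_mul_log_div_mul_log hφ hy hn
  have hlower : Tendsto (fun t ↦ (n t * log (n t) - n t) / (φ t * log (φ t))) l (𝓝 (y - 0)) := by
    refine (hupper.sub (hn.div_atTop (tendsto_log_atTop.comp hφ))).congr fun t ↦ ?_
    rw [sub_div, div_div]
    rfl
  rw [sub_zero] at hlower
  have hw : ∀ᶠ t in l, 0 < φ t * log (φ t) :=
    (hφ.atTop_mul_atTop₀ (tendsto_log_atTop.comp hφ)).eventually_gt_atTop 0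
  refine tendsto_of_tendsto_of_tendsto_of_le_of_le' hlower hupper ?_ ?_
  · filter_upwards [hw] with t ht
    exact div_le_div_of_nonneg_right (mul_log_sub_le_log_factorial _) ht.le
  · filter_upwards [hw] with t ht
    exact div_le_div_of_nonneg_right (log_factorial_le_mul_log _) ht.le

lemma tendsto_log_poissonTerm_div_mul_log {a : α → ℝ} {n : α → ℕ} {a₀ y : ℝ} (ha₀ : 0 < a₀)
    (ha : Tendsto a l (𝓝 a₀)) (hy : 0 < y) (hn : Tendsto (fun t ↦ (n t : ℝ) / φ t) l (𝓝 y)) :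
    Tendsto (fun t ↦ log (poissonTerm (a t) (n t)) / (φ t * log (φ t))) l (𝓝 (-y)) := by
  have hlogφ := tendsto_log_atTop.comp hφ
  have hlim := ((hn.mul ((ha.log ha₀.ne').div_atTop hlogφ)).sub
    (ha.div_atTop (hφ.atTop_mul_atTop₀ hlogφ))).sub (tendsto_log_factorial_div_mul_log hφ hy hn)
  rw [mul_zero, sub_self, zero_sub] at hlim
  refine hlim.congr' ?_
  filter_upwards [ha.eventually (eventually_gt_nhds ha₀), hφ.eventually_gt_atTop 1] with t hat hφ1
  have hlogφ : log (φ t) ≠ 0 := (log_pos hφ1).ne'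
  simp only [Function.comp_apply, log_poissonTerm hat]
  field_simp

end Asymptotics

lemma tendsto_poissonMean {P Q : ℝ} (hQ : 0 < Q) :
    Tendsto (fun T ↦ P / Q * (1 - exp (-(Q * T)))) atTop (𝓝 (P / Q)) := by
  have : Tendsto (fun T ↦ exp (-(Q * T))) atTop (𝓝 0) :=
    tendsto_exp_atBot.comp (tendsto_neg_atTop_atBot.comp (tendsto_id.const_mul_atTop hQ))
  simpa using (this.const_sub 1).const_mul (P / Q)

lemma tendsto_log_poissonProb {P Q x ε : ℝ} {φ : ℝ → ℝ} (hP : 0 < P) (hQ : 0 < Q)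
    (hφ : Tendsto φ atTop atTop) (hε : 0 < ε) (hεx : ε < x) :
    Tendsto (fun T ↦ 1 / (φ T * log (φ T)) * log (poissonProb P Q (φ T) x ε T)) atTop
      (𝓝 (-(x - ε))) := by
  set a : ℝ → ℝ := fun T ↦ P / Q * (1 - exp (-(Q * T)))
  set n : ℝ → ℕ := fun T ↦ ⌈φ T * (x - ε)⌉₊
  have hxε : 0 < x - ε := sub_pos.2 hεx
  have hn : Tendsto (fun T ↦ (n T : ℝ) / φ T) atTop (𝓝 (x - ε)) :=
    ((tendsto_nat_ceil_mul_div_atTop hxε.le).comp hφ).congr fun T ↦ by simp [n, mul_comm]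
  have ha_pos : ∀ᶠ T in atTop, 0 < a T := by
    filter_upwards [eventually_gt_atTop 0] with T hT
    exact mul_pos (div_pos hP hQ) (sub_pos.2 (exp_lt_one_iff.2 (neg_lt_zero.2 (mul_pos hQ hT))))
  have ha_le (T : ℝ) : a T ≤ P / Q :=
    mul_le_of_le_one_right (div_pos hP hQ).le (sub_le_self _ (exp_pos _).le)
  have hceil_le : ∀ᶠ T in atTop, (n T : ℝ) ≤ φ T * (x + ε) := by
    filter_upwards [(hφ.atTop_mul_const (mul_pos two_pos hε)).eventually_ge_atTop 1,
      hφ.eventually_ge_atTop 0] with T h1 h0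
    have := Nat.ceil_lt_add_one (mul_nonneg h0 hxε.le)
    linarith
  have hmean_le : ∀ᶠ T in atTop, 2 * a T ≤ n T + 1 := by
    filter_upwards [(hφ.atTop_mul_const hxε).eventually_ge_atTop (2 * (P / Q))] with T h
    linarith [Nat.le_ceil (φ T * (x - ε)), ha_le T]
  have := tendsto_log_div_of_le_of_le_const_mul two_pos
    (hφ.atTop_mul_atTop₀ (tendsto_log_atTop.comp hφ)) (ha_pos.mono fun T h ↦ poissonTerm_pos h _)
    (ha_pos.and hceil_le |>.mono fun T h ↦ poissonTerm_ceil_le_poissonWindow h.1.le h.2)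
    (ha_pos.and hmean_le |>.mono fun T h ↦ poissonWindow_le_two_mul h.1.le h.2)
    (tendsto_log_poissonTerm_div_mul_log hφ (div_pos hP hQ) (tendsto_poissonMean hQ) hxε hn)
  simp only [one_div_mul_eq_div, poissonProb_eq_poissonWindow]
  exact this

theorem stmt_12_general (P Q : ℝ) (hP : 0 < P) (hQ : 0 < Q)
    (φ : ℝ → ℝ)
    (hφ : Filter.Tendsto φ Filter.atTop Filter.atTop)
    (x : ℝ) (hx : 0 < x) :
    Filter.Tendsto (fun ε : ℝ =>
      Filter.limsup (fun T : ℝ =>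
        (1 / (φ T * Real.log (φ T))) * Real.log (poissonProb P Q (φ T) x ε T))
        Filter.atTop)
      (nhdsWithin 0 (Set.Ioi 0)) (nhds (-x)) ∧
    Filter.Tendsto (fun ε : ℝ =>
      Filter.liminf (fun T : ℝ =>
        (1 / (φ T * Real.log (φ T))) * Real.log (poissonProb P Q (φ T) x ε T))
        Filter.atTop)
      (nhdsWithin 0 (Set.Ioi 0)) (nhds (-x)) := by
  have hlim (ε : ℝ) (hε : ε ∈ Set.Ioo 0 x) := tendsto_log_poissonProb hP hQ hφ hε.1 hε.2
  have hlimit : Tendsto (fun ε : ℝ ↦ -(x - ε)) (𝓝[>] 0) (𝓝 (-(x - 0))) :=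
    ((by fun_prop : Continuous fun ε : ℝ ↦ -(x - ε)).tendsto 0).mono_left nhdsWithin_le_nhds
  rw [sub_zero] at hlimit
  refine ⟨hlimit.congr' ?_, hlimit.congr' ?_⟩ <;> filter_upwards [Ioo_mem_nhdsGT hx] with ε hε
  exacts [(hlim ε hε).limsup_eq.symm, (hlim ε hε).liminf_eq.symm]

/-- Let `P, Q > 0`, `a(T) = (P/Q)(1-e^{-QT})`, `φ(T) → ∞`, and let `X_T` be Poisson with mean
`a(T)`. Then for every `x > 0`, both the `limsup` and the `liminf` (as `T → ∞`) of
`(1/(φ(T) ln φ(T))) ln P(x-ε ≤ X_T/φ(T) ≤ x+ε)` tend to `-x` as `ε → 0⁺`. -/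
theorem stmt_12 (P Q : ℝ) (hP : 0 < P) (hQ : 0 < Q)
    (φ : ℝ → ℝ) (hφpos : ∀ T > (0:ℝ), 0 < φ T)
    (hφ : Filter.Tendsto φ Filter.atTop Filter.atTop)
    (x : ℝ) (hx : 0 < x) :
    Filter.Tendsto (fun ε : ℝ =>
      Filter.limsup (fun T : ℝ =>
        (1 / (φ T * Real.log (φ T))) * Real.log (poissonProb P Q (φ T) x ε T))
        Filter.atTop)
      (nhdsWithin 0 (Set.Ioi 0)) (nhds (-x)) ∧
    Filter.Tendsto (fun ε : ℝ =>
      Filter.liminf (fun T : ℝ =>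
        (1 / (φ T * Real.log (φ T))) * Real.log (poissonProb P Q (φ T) x ε T))
        Filter.atTop)
      (nhdsWithin 0 (Set.Ioi 0)) (nhds (-x)) :=
  stmt_12_general P Q hP hQ φ hφ x hx
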